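/- arXiv:2301.02061 — 2 statements merged into one kernel-verified Lean document; each statement's English description precedes it below -/
import Mathlib

section
/- Let K : ℝ → ℝ be a class-K function (continuous, strictly increasing, K(0)=0) that is differentiable with K' > 0 on (0,∞). Let L(t) = K(x(t)) for a differentiable function x : [t₀,∞) → ℝ with x(t₀) > 0, and suppose whenever x(t) > 0 we have L'(t) > −K'(x(t)) · κ · x(t) for some constant κ > 0. Then x(t) > 0 for all t ≥ t₀. -/
open Set

theorem no_finite_time_collision
    (K : ℝ → ℝ) (x : ℝ → ℝ) (t₀ κ : ℝ) (hκ : 0 < κ)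
    (hK_cont : Continuous K)
    (hK_mono : StrictMonoOn K (Ici 0))
    (hK0 : K 0 = 0)
    (hK_diff : ∀ y ∈ Ioi (0 : ℝ), DifferentiableAt ℝ K y)
    (hK_deriv_pos : ∀ y ∈ Ioi (0 : ℝ), 0 < deriv K y)
    (hx_diff : Differentiable ℝ x)
    (hx0 : 0 < x t₀)
    (hcomp : ∀ t, t₀ ≤ t → 0 < x t →
      -(deriv K (x t)) * κ * x t < deriv (fun τ => K (x τ)) t) :
    ∀ t, t₀ ≤ t → 0 < x t := by
  -- derivative bound: whenever x s > 0 and s ≥ t₀, deriv x s > -κ * x s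
  have hxderiv : ∀ s, t₀ ≤ s → 0 < x s → -κ * x s < deriv x s := by
    intro s hs hxs
    have hKd := hK_diff (x s) hxs
    have hchain : deriv (fun τ => K (x τ)) s = deriv K (x s) * deriv x s := by
      have := (hKd.hasDerivAt.comp s (hx_diff s).hasDerivAt)
      exact this.deriv
    have h := hcomp s hs hxs
    rw [hchain] at h
    have hKp := hK_deriv_pos (x s) hxs
    nlinarith [h, hKp]
  -- by contradiction
  intro t ht
  by_contra hneg
  push_neg at hneg
  -- first time x ≤ 0 on [t₀, t]
  set S : Set ℝ := {s | s ∈ Icc t₀ t ∧ x s ≤ 0} with hS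
  have hxc : Continuous x := hx_diff.continuous
  have hSne : S.Nonempty := ⟨t, ⟨ht, le_refl t⟩, hneg⟩
  have hSbdd : BddBelow S := ⟨t₀, fun s hs => hs.1.1⟩
  have hSclosed : IsClosed S := ((isClosed_Icc).inter (isClosed_le hxc continuous_const))
  set T := sInf S with hT
  have hTmem : T ∈ S := hSclosed.csInf_mem hSne hSbdd
  have hTge : t₀ ≤ T := hTmem.1.1
  have hxT : x T ≤ 0 := hTmem.2
  have hTne : t₀ < T := by
    rcases lt_or_eq_of_le hTge with h | h
    · exact h
    · exfalso; rw [← h] at hxT; linarith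
  -- x s > 0 on [t₀, T)
  have hpos : ∀ s, t₀ ≤ s → s < T → 0 < x s := by
    intro s hs hsT
    by_contra hc
    push_neg at hc
    have hst : s ≤ t := le_trans (le_of_lt hsT) hTmem.1.2
    have : s ∈ S := ⟨⟨hs, hst⟩, hc⟩
    have := csInf_le hSbdd this
    linarith
  -- g s = exp (κ s) * x s is strictly increasing on [t₀, T]
  set g : ℝ → ℝ := fun s => Real.exp (κ * s) * x s with hg
  have hgd : ∀ s, HasDerivAt g (Real.exp (κ * s) * κ * x s + Real.exp (κ * s) * deriv x s) s := by
    intro s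
    have h1 : HasDerivAt (fun s : ℝ => κ * s) κ s := by
      simpa using (hasDerivAt_id s).const_mul κ
    have h2 : HasDerivAt (fun s : ℝ => Real.exp (κ * s)) (Real.exp (κ * s) * κ) s := h1.exp
    exact h2.mul (hx_diff s).hasDerivAt
  have hgmono : StrictMonoOn g (Icc t₀ T) := by
    apply strictMonoOn_of_deriv_pos (convex_Icc t₀ T)
    · exact (Continuous.mul (Real.continuous_exp.comp (continuous_const.mul continuous_id)) hxc).continuousOn
    · intro s hs
      rw [interior_Icc] at hs
      have hxs : 0 < x s := hpos s (le_of_lt hs.1) hs.2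
      have hd := hxderiv s (le_of_lt hs.1) hxs
      rw [(hgd s).deriv]
      have he : (0:ℝ) < Real.exp (κ * s) := Real.exp_pos _
      nlinarith
  have h1 : g t₀ < g T := hgmono ⟨le_refl _, hTge⟩ ⟨hTge, le_refl _⟩ hTne
  have h2 : 0 < g t₀ := mul_pos (Real.exp_pos _) hx0
  have h3 : g T ≤ 0 := mul_nonpos_of_nonneg_of_nonpos (le_of_lt (Real.exp_pos _)) hxT
  linarith
end

section
/- Let P₁,…,P_K ∈ [0,1), let k ≠ v be indices, and let P_k′ ∈ [0, P_k] and P_v′ ∈ [0, 1−P_v) be such that P_k′ < (1−P_k)·P_v′ / (1 − P_v − P_v′). Then 1 − ∏_{j}(1−Q_j) > 1 − ∏_{j}(1−P_j), where Q_k = P_k − P_k′, Q_v = P_v + P_v′, and Q_j = P_j for j ∉ {k,v}. -/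
theorem agent_transfer_increases_detection
    (K : ℕ) (P : Fin K → ℝ) (hP : ∀ j, P j ∈ Set.Ico (0 : ℝ) 1)
    (k v : Fin K) (hkv : k ≠ v)
    (Pk' Pv' : ℝ)
    (hPk' : Pk' ∈ Set.Icc 0 (P k))
    (hPv' : Pv' ∈ Set.Ico 0 (1 - P v))
    (hineq : Pk' < (1 - P k) * Pv' / (1 - P v - Pv'))
    (Q : Fin K → ℝ)
    (hQ : ∀ j, Q j = if j = k then P k - Pk' else if j = v then P v + Pv' else P j) :
    1 - ∏ j, (1 - P j) < 1 - ∏ j, (1 - Q j) := by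
  have hden : 0 < 1 - P v - Pv' := by linarith [hPv'.2]
  have hkey : Pk' * (1 - P v - Pv') < (1 - P k) * Pv' := by
    nlinarith [(lt_div_iff₀ hden).mp hineq]
  have hvk : v ∈ Finset.univ.erase k := Finset.mem_erase.mpr ⟨(Ne.symm hkv), Finset.mem_univ v⟩
  have hsplit : ∀ f : Fin K → ℝ, ∏ j, f j = f k * (f v * ∏ j ∈ (Finset.univ.erase k).erase v, f j) := by
    intro f
    rw [← Finset.mul_prod_erase Finset.univ f (Finset.mem_univ k), ← Finset.mul_prod_erase _ f hvk]
  have hQk : Q k = P k - Pk' := by rw [hQ]; simp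
  have hQv : Q v = P v + Pv' := by rw [hQ]; simp [Ne.symm hkv, hkv]
  have htail : ∏ j ∈ (Finset.univ.erase k).erase v, (1 - Q j) = ∏ j ∈ (Finset.univ.erase k).erase v, (1 - P j) := by
    apply Finset.prod_congr rfl
    intro j hj
    rw [Finset.mem_erase, Finset.mem_erase] at hj
    rw [hQ, if_neg hj.2.1, if_neg hj.1]
  have htailpos : 0 < ∏ j ∈ (Finset.univ.erase k).erase v, (1 - P j) :=
    Finset.prod_pos (fun j _ => by linarith [(hP j).2])
  have hfront : (1 - Q k) * (1 - Q v) < (1 - P k) * (1 - P v) := by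
    rw [hQk, hQv]; nlinarith
  have h1 : ∏ j, (1 - Q j) < ∏ j, (1 - P j) := by
    rw [hsplit (fun j => 1 - Q j), hsplit (fun j => 1 - P j), htail]
    calc (1 - Q k) * ((1 - Q v) * ∏ j ∈ (Finset.univ.erase k).erase v, (1 - P j))
        = ((1 - Q k) * (1 - Q v)) * ∏ j ∈ (Finset.univ.erase k).erase v, (1 - P j) := by ring
      _ < ((1 - P k) * (1 - P v)) * ∏ j ∈ (Finset.univ.erase k).erase v, (1 - P j) :=
          mul_lt_mul_of_pos_right hfront htailpos
      _ = (1 - P k) * ((1 - P v) * ∏ j ∈ (Finset.univ.erase k).erase v, (1 - P j)) := by ring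
  linarith
end
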